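/- Define ‖f‖_∞ := max_{z∈V} |f(z)/d_z|. For every λ > 0 and x, y ∈ V, KD_λ(x,y) = sup{⟨J_λ f, δ_x − δ_y⟩ : f ∈ Lip_w^1(V), ‖f‖_∞ ≤ diam(H)}. Moreover, the set {f ∈ Lip_w^1(V) : ‖f‖_∞ ≤ diam(H)} is a compact subset of ℝ^V. -/

import Mathlib

open scoped BigOperators

noncomputable section

namespace HypRicci

variable {V : Type*} [Fintype V] [DecidableEq V]

/-- A finite weighted hypergraph on vertex set `V`: a finite set of nonempty
hyperedges together with positive weights. -/
structure Hypergraph (V : Type*) [Fintype V] [DecidableEq V] : Type _ where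
  E : Finset (Finset V)
  w : Finset V → ℝ
  w_pos : ∀ e ∈ E, 0 < w e
  e_nonempty : ∀ e ∈ E, e.Nonempty

/-- Degree `d_x = ∑_{e ∋ x} w(e)`. -/
def deg (H : Hypergraph V) (x : V) : ℝ := ∑ e ∈ H.E, if x ∈ e then H.w e else 0

/-- Volume `vol(V) = ∑_x d_x`. -/
def vol (H : Hypergraph V) : ℝ := ∑ x, deg H x

/-- Weighted inner product `⟨f,g⟩ = ∑_x f(x) g(x) / d_x`. -/
def inn (H : Hypergraph V) (f g : V → ℝ) : ℝ := ∑ x, f x * g x / deg H x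

/-- Norm associated to `inn`. -/
def nrm (H : Hypergraph V) (f : V → ℝ) : ℝ := Real.sqrt (inn H f f)

/-- Indicator function `δ_x`. -/
def delta (x : V) : V → ℝ := fun z => if z = x then 1 else 0

/-- Standard (unweighted) dot product `u^⊤ v`. -/
def dot (u v : V → ℝ) : ℝ := ∑ x, u x * v x

/-- Base polytope `B_e = conv{δ_x − δ_y : x,y ∈ e}`. -/
def Bp (e : Finset V) : Set (V → ℝ) :=
  convexHull ℝ {b : V → ℝ | ∃ x ∈ e, ∃ y ∈ e, b = delta x - delta y}

/-- The multivalued hypergraph Laplacian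
`L(f) = {∑_e w(e) (b_e^⊤ f) b_e : b_e ∈ argmax_{b ∈ B_e} b^⊤ f}`. -/
def Lap (H : Hypergraph V) (f : V → ℝ) : Set (V → ℝ) :=
  { g | ∃ b : Finset V → (V → ℝ),
      (∀ e ∈ H.E, b e ∈ Bp e ∧ ∀ b' ∈ Bp e, dot b' f ≤ dot (b e) f) ∧
      g = ∑ e ∈ H.E, (H.w e * dot (b e) f) • b e }

/-- `D⁻¹ f`. -/
def Dinv (H : Hypergraph V) (f : V → ℝ) : V → ℝ := fun x => f x / deg H x

/-- Normalized Laplacian `𝓛(f) = L(D⁻¹ f)`. -/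
def NL (H : Hypergraph V) (f : V → ℝ) : Set (V → ℝ) := Lap H (Dinv H f)

/-- The resolvent `J_λ = (I + λ𝓛)⁻¹`: it sends `f` to the (unique) `g` with
`f ∈ g + λ 𝓛(g)`. -/
def Resolvent (H : Hypergraph V) (l : ℝ) (f : V → ℝ) : V → ℝ :=
  Classical.epsilon fun g => ∃ h ∈ NL H g, f = g + l • h

/-- Adjacency: `x ∼ y` iff some hyperedge contains both. -/
def Adj (H : Hypergraph V) (x y : V) : Prop := ∃ e ∈ H.E, x ∈ e ∧ y ∈ e

/-- There is a chain of length `n` of successively adjacent vertices from `x` to `y`. -/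
def chainProp (H : Hypergraph V) (x y : V) (n : ℕ) : Prop :=
  ∃ z : ℕ → V, z 0 = x ∧ z n = y ∧ ∀ i < n, Adj H (z i) (z (i + 1))

/-- Connectedness of the hypergraph. -/
def Connected (H : Hypergraph V) : Prop := ∀ x y : V, ∃ n, chainProp H x y n

/-- Graph distance (as a natural number). -/
def hdistN (H : Hypergraph V) (x y : V) : ℕ := sInf {n | chainProp H x y n}

/-- Graph distance `d(x,y)` as a real number. -/
def gdist (H : Hypergraph V) (x y : V) : ℝ := (hdistN H x y : ℝ)

/-- Diameter `diam(H) = max_{x,y} d(x,y)`. -/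
def hdiam (H : Hypergraph V) : ℝ :=
  (((Finset.univ : Finset (V × V)).sup fun p => hdistN H p.1 p.2 : ℕ) : ℝ)

/-- Weighted `1`-Lipschitz functions: `⟨f, δ_x − δ_y⟩ ≤ d(x,y)` for all `x, y`. -/
def Lip1 (H : Hypergraph V) : Set (V → ℝ) :=
  { f | ∀ x y : V, inn H f (delta x - delta y) ≤ gdist H x y }

/-- The `λ`-nonlinear Kantorovich difference. -/
def KD (H : Hypergraph V) (l : ℝ) (x y : V) : ℝ :=
  sSup { r | ∃ f ∈ Lip1 H, r = inn H (Resolvent H l f) (delta x - delta y) }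

/-- `κ_λ(x,y) = 1 − KD_λ(x,y)/d(x,y)`. -/
def kappa (H : Hypergraph V) (l : ℝ) (x y : V) : ℝ := 1 - KD H l x y / gdist H x y

/-- Lower coarse Ricci curvature `κ̲(x,y) = liminf_{λ↓0} κ_λ(x,y)/λ`. -/
def kappaLower (H : Hypergraph V) (x y : V) : EReal :=
  Filter.liminf (fun l : ℝ => ((kappa H l x y / l : ℝ) : EReal)) (nhdsWithin 0 (Set.Ioi 0))

/-- Upper coarse Ricci curvature `κ̄(x,y) = limsup_{λ↓0} κ_λ(x,y)/λ`. -/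
def kappaUpper (H : Hypergraph V) (x y : V) : EReal :=
  Filter.limsup (fun l : ℝ => ((kappa H l x y / l : ℝ) : EReal)) (nhdsWithin 0 (Set.Ioi 0))

/-- Canonical restriction `𝓛⁰ f`: the unique element of minimal norm of `𝓛(f)`. -/
def L0 (H : Hypergraph V) (f : V → ℝ) : V → ℝ :=
  Classical.epsilon fun g => g ∈ NL H f ∧ ∀ h ∈ NL H f, nrm H g ≤ nrm H h

/-- The stationary distribution `π(x) = d_x / vol(V)`. -/
def piH (H : Hypergraph V) : V → ℝ := fun x => deg H x / vol H

/-- The energy `Q(h) = (1/2) ∑_e w(e) max_{x,y ∈ e} (h(x) − h(y))²`. -/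
def Qform (H : Hypergraph V) (h : V → ℝ) : ℝ :=
  (1 / 2) * ∑ e ∈ H.E, H.w e * sSup { r | ∃ x ∈ e, ∃ y ∈ e, r = (h x - h y) ^ 2 }


/-! The resolvent is well defined: `J_λ f` minimises `½‖g - f‖² + λ Φ(D⁻¹g)` with
`Φ(u) = ½ ∑ₑ w(e) σₑ(u)²`, where `σₑ` is the support function of `Bₑ`; Danskin's rule for the
directional derivatives of `σₑ` and a Hahn–Banach separation show that `f - g ∈ λ𝓛(g)` at a
minimiser, and monotonicity of `𝓛` gives uniqueness. Since `𝓛(g + c·d) = 𝓛(g)` and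
`⟨d, δₓ - δ_y⟩ = 0` for the degree vector `d`, both `J_λ` and `⟨·, δₓ - δ_y⟩` commute with
adding multiples of `d`; shifting `f ∈ Lip¹_w` by `-(f(x)/dₓ)·d` makes `‖f‖_∞ ≤ diam H` without
changing `⟨J_λ f, δₓ - δ_y⟩`. The bounded set is closed and lies in a box, hence compact. -/

open Filter Topology

set_option linter.unusedSectionVars false

section InnerProduct

variable (H : Hypergraph V)

lemma dot_eq_dotProduct (u v : V → ℝ) : dot u v = u ⬝ᵥ v := rfl

lemma inn_eq_Dinv_dotProduct (f g : V → ℝ) : inn H f g = Dinv H f ⬝ᵥ g :=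
  Finset.sum_congr rfl fun _ _ => div_mul_eq_mul_div _ _ _ |>.symm

lemma inn_eq_dotProduct_Dinv (f g : V → ℝ) : inn H f g = f ⬝ᵥ Dinv H g :=
  Finset.sum_congr rfl fun _ _ => mul_div_assoc _ _ _

lemma Dinv_sub (f g : V → ℝ) : Dinv H (f - g) = Dinv H f - Dinv H g := by
  funext x; simp [Dinv, sub_div]

lemma Dinv_add_smul (f g : V → ℝ) (t : ℝ) :
    Dinv H (f + t • g) = Dinv H f + t • Dinv H g := by
  funext x; simp [Dinv, add_div, mul_div_assoc]

lemma inn_add_smul_self (f g : V → ℝ) (t : ℝ) :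
    inn H (f + t • g) (f + t • g) = inn H f f + 2 * t * inn H f g + t ^ 2 * inn H g g := by
  simp only [inn, Finset.mul_sum, ← Finset.sum_add_distrib]
  refine Finset.sum_congr rfl fun x _ => ?_
  simp only [Pi.add_apply, Pi.smul_apply, smul_eq_mul]
  ring

lemma inn_delta_sub (f : V → ℝ) (x y : V) :
    inn H f (delta x - delta y) = f x / deg H x - f y / deg H y := by
  simp [inn_eq_Dinv_dotProduct, delta, dotProduct, mul_sub, Finset.sum_sub_distrib, Dinv]

lemma sq_le_deg_mul_inn_self (hdeg : ∀ x, 0 < deg H x) (f : V → ℝ) (x : V) :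
    f x ^ 2 ≤ deg H x * inn H f f := by
  have hx : f x * f x / deg H x ≤ inn H f f :=
    Finset.single_le_sum (f := fun z => f z * f z / deg H z)
      (fun z _ => div_nonneg (mul_self_nonneg _) (hdeg z).le) (Finset.mem_univ x)
  rw [div_le_iff₀ (hdeg x)] at hx
  nlinarith

lemma eq_zero_of_inn_self_nonpos (hdeg : ∀ x, 0 < deg H x) {f : V → ℝ}
    (hf : inn H f f ≤ 0) : f = 0 := by
  funext x
  have := sq_le_deg_mul_inn_self H hdeg f x
  have := mul_nonpos_of_nonneg_of_nonpos (hdeg x).le hf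
  exact pow_eq_zero_iff two_ne_zero |>.1 (le_antisymm (by linarith) (sq_nonneg _))

end InnerProduct

section BasePolytope

variable {e : Finset V}

lemma delta_sub_mem_Bp {x y : V} (hx : x ∈ e) (hy : y ∈ e) : delta x - delta y ∈ Bp e :=
  subset_convexHull ℝ _ ⟨x, hx, y, hy, rfl⟩

lemma dot_delta_sub (x y : V) (u : V → ℝ) : dot (delta x - delta y) u = u x - u y := by
  simp [dot, delta, sub_mul, Finset.sum_sub_distrib]

lemma dot_le_of_mem_Bp {u : V → ℝ} {c : ℝ} (hgen : ∀ x ∈ e, ∀ y ∈ e, u x - u y ≤ c)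
    {b : V → ℝ} (hb : b ∈ Bp e) : dot b u ≤ c := by
  refine convexHull_min (t := {b | dot b u ≤ c}) ?_ (convex_halfSpace_le ?_ c) hb
  · rintro _ ⟨x, hx, y, hy, rfl⟩
    simpa [dot_delta_sub] using hgen x hx y hy
  · exact ⟨fun a b => add_dotProduct a b u, fun c a => smul_dotProduct c a u⟩

lemma dot_const_eq_zero_of_mem_Bp {b : V → ℝ} (hb : b ∈ Bp e) (c : ℝ) :
    dot b (fun _ => c) = 0 := by
  refine le_antisymm (dot_le_of_mem_Bp (by simp) hb) ?_
  have := dot_le_of_mem_Bp (u := -fun _ => c) (c := 0) (by simp) hb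
  rw [dot_eq_dotProduct, dotProduct_neg] at this
  exact neg_nonpos.1 this

lemma isCompact_Bp (e : Finset V) : IsCompact (Bp e) := by
  refine Set.Finite.isCompact_convexHull (𝕜 := ℝ) <|
    ((e ×ˢ e).finite_toSet.image fun p => delta p.1 - delta p.2).subset ?_
  rintro _ ⟨x, hx, y, hy, rfl⟩
  exact ⟨(x, y), Finset.mem_product.2 ⟨hx, hy⟩, rfl⟩

/-- The support function `σₑ(u) = max_{b ∈ Bₑ} bᵀu = max_{x, y ∈ e} (u(x) - u(y))`. -/
def sig (e : Finset V) (u : V → ℝ) : ℝ :=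
  if h : e.Nonempty then (e ×ˢ e).sup' (h.product h) fun p => u p.1 - u p.2 else 0

lemma sig_eq_sup' (he : e.Nonempty) (u : V → ℝ) :
    sig e u = (e ×ˢ e).sup' (he.product he) fun p => u p.1 - u p.2 :=
  dif_pos he

lemma sub_le_sig (he : e.Nonempty) {x y : V} (hx : x ∈ e) (hy : y ∈ e) (u : V → ℝ) :
    u x - u y ≤ sig e u := by
  rw [sig_eq_sup' he]
  exact Finset.le_sup' (fun p : V × V => u p.1 - u p.2) (b := (x, y))
    (Finset.mem_product.2 ⟨hx, hy⟩)

lemma sig_nonneg (he : e.Nonempty) (u : V → ℝ) : 0 ≤ sig e u := by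
  obtain ⟨x, hx⟩ := he
  simpa using sub_le_sig ⟨x, hx⟩ hx hx u

lemma dot_le_sig (he : e.Nonempty) {b : V → ℝ} (hb : b ∈ Bp e) (u : V → ℝ) :
    dot b u ≤ sig e u :=
  dot_le_of_mem_Bp (fun _ hx _ hy => sub_le_sig he hx hy u) hb

@[fun_prop]
lemma continuous_sig (e : Finset V) : Continuous (sig e) := by
  unfold sig
  split_ifs
  · exact Continuous.finset_sup'_apply _ fun p _ =>
      (continuous_apply p.1).sub (continuous_apply p.2)
  · exact continuous_const

/-- Danskin's rule for a finite maximum: take a maximiser of `b` among the maximisers of `a`. -/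
lemma exists_eventually_forall_add_mul_le {ι : Type*} {s : Finset ι} (hs : s.Nonempty)
    (a b : ι → ℝ) : ∃ i ∈ s, (∀ j ∈ s, a j ≤ a i) ∧
      ∀ᶠ t in 𝓝[>] (0 : ℝ), ∀ j ∈ s, a j + t * b j ≤ a i + t * b i := by
  classical
  obtain ⟨i₀, hi₀s, hi₀⟩ := s.exists_max_image a hs
  obtain ⟨i, hiT, hi⟩ := (s.filter fun j => a j = a i₀).exists_max_image b
    ⟨i₀, Finset.mem_filter.2 ⟨hi₀s, rfl⟩⟩
  obtain ⟨his, hai⟩ := Finset.mem_filter.1 hiT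
  refine ⟨i, his, fun j hj => hai ▸ hi₀ j hj, (Finset.eventually_all s).2 fun j hj => ?_⟩
  by_cases haj : a j = a i₀
  · filter_upwards [self_mem_nhdsWithin] with t (ht : 0 < t)
    have hb := hi j (Finset.mem_filter.2 ⟨hj, haj⟩)
    rw [haj, ← hai]
    gcongr
  · have hlt : a j < a i := hai ▸ lt_of_le_of_ne (hi₀ j hj) haj
    have hlim : ∀ k, Tendsto (fun t : ℝ => a k + t * b k) (𝓝[>] 0) (𝓝 (a k)) := fun k =>
      ((continuous_const.add (continuous_id.mul continuous_const)).tendsto' 0 (a k)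
        (by simp)).mono_left nhdsWithin_le_nhds
    exact ((hlim j).eventually_lt (hlim i) hlt).mono fun _ => le_of_lt

def face (e : Finset V) (u : V → ℝ) : Set (V → ℝ) := {b | b ∈ Bp e ∧ dot b u = sig e u}

lemma convex_face (e : Finset V) (u : V → ℝ) : Convex ℝ (face e u) := by
  intro b₁ h₁ b₂ h₂ s t hs ht hst
  refine ⟨convex_convexHull ℝ _ h₁.1 h₂.1 hs ht hst, ?_⟩
  rw [dot_eq_dotProduct, add_dotProduct, smul_dotProduct, smul_dotProduct, ← dot_eq_dotProduct,
    ← dot_eq_dotProduct, h₁.2, h₂.2, smul_eq_mul, smul_eq_mul, ← add_mul, hst, one_mul]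

lemma isCompact_face (e : Finset V) (u : V → ℝ) : IsCompact (face e u) :=
  (isCompact_Bp e).inter_right <| isClosed_eq (by unfold dot; fun_prop) continuous_const

lemma exists_mem_face_eventually_sig_add_smul_le (he : e.Nonempty) (u w : V → ℝ) :
    ∃ b ∈ face e u, ∀ᶠ t in 𝓝[>] (0 : ℝ), sig e (u + t • w) ≤ sig e u + t * dot b w := by
  obtain ⟨p, hp, hmax, hev⟩ := exists_eventually_forall_add_mul_le (he.product he)
    (fun p => u p.1 - u p.2) (fun p => w p.1 - w p.2)
  obtain ⟨hx, hy⟩ := Finset.mem_product.1 hp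
  have hsig : u p.1 - u p.2 = sig e u :=
    le_antisymm (sub_le_sig he hx hy u) (by rw [sig_eq_sup' he]; exact Finset.sup'_le _ _ hmax)
  refine ⟨delta p.1 - delta p.2, ⟨delta_sub_mem_Bp hx hy, by rw [dot_delta_sub, hsig]⟩,
    hev.mono fun t ht => ?_⟩
  rw [dot_delta_sub, sig_eq_sup' he, ← hsig]
  refine Finset.sup'_le _ _ fun q hq => ?_
  simp only [Pi.add_apply, Pi.smul_apply, smul_eq_mul]
  linarith [ht q hq]

end BasePolytope

section Monotone

variable (H : Hypergraph V)

lemma Lap_monotone {u₁ u₂ h₁ h₂ : V → ℝ} (hm₁ : h₁ ∈ Lap H u₁) (hm₂ : h₂ ∈ Lap H u₂) :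
    0 ≤ dot (h₁ - h₂) (u₁ - u₂) := by
  obtain ⟨b₁, hb₁, rfl⟩ := hm₁
  obtain ⟨b₂, hb₂, rfl⟩ := hm₂
  simp only [dot_eq_dotProduct, sub_dotProduct, sum_dotProduct, smul_dotProduct,
    dotProduct_sub, ← Finset.sum_sub_distrib, smul_eq_mul]
  refine Finset.sum_nonneg fun e he => ?_
  obtain ⟨hB₁, hmax₁⟩ := hb₁ e he
  obtain ⟨hB₂, hmax₂⟩ := hb₂ e he
  have hz : (0 : V → ℝ) ∈ Bp e := by
    obtain ⟨x, hx⟩ := H.e_nonempty e he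
    simpa using delta_sub_mem_Bp hx hx
  have ha₁ := hmax₁ 0 hz
  have ha₂ := hmax₂ 0 hz
  have hq := hmax₁ _ hB₂
  have hp := hmax₂ _ hB₁
  simp only [dot_eq_dotProduct, zero_dotProduct] at ha₁ ha₂ hq hp
  have hw := H.w_pos e he
  -- with `aᵢ = bᵢᵀuᵢ`, the summand is `w (a₁ (a₁ - b₁ᵀu₂) - a₂ (b₂ᵀu₁ - a₂)) ≥ w (a₁ - a₂)²`
  nlinarith [mul_nonneg hw.le (sq_nonneg (b₁ e ⬝ᵥ u₁ - b₂ e ⬝ᵥ u₂)),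
    mul_nonneg (mul_nonneg hw.le ha₁) (sub_nonneg.2 hp),
    mul_nonneg (mul_nonneg hw.le ha₂) (sub_nonneg.2 hq)]

lemma NL_monotone {g₁ g₂ h₁ h₂ : V → ℝ} (hm₁ : h₁ ∈ NL H g₁) (hm₂ : h₂ ∈ NL H g₂) :
    0 ≤ inn H (g₁ - g₂) (h₁ - h₂) := by
  rw [inn_eq_Dinv_dotProduct, dotProduct_comm, Dinv_sub]
  exact Lap_monotone H hm₁ hm₂

lemma eq_of_add_smul_mem_NL (hdeg : ∀ x, 0 < deg H x) {l : ℝ} (hl : 0 ≤ l)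
    {g₁ g₂ h₁ h₂ : V → ℝ} (hm₁ : h₁ ∈ NL H g₁) (hm₂ : h₂ ∈ NL H g₂)
    (heq : g₁ + l • h₁ = g₂ + l • h₂) : g₁ = g₂ := by
  have hsub : g₁ - g₂ = -(l • (h₁ - h₂)) := by
    rw [smul_sub]; linear_combination heq
  have hinn : inn H (g₁ - g₂) (g₁ - g₂) = -(l * inn H (g₁ - g₂) (h₁ - h₂)) := by
    rw [inn_eq_Dinv_dotProduct, inn_eq_Dinv_dotProduct]
    nth_rewrite 2 [hsub]
    rw [dotProduct_neg, dotProduct_smul, smul_eq_mul]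
  have := mul_nonneg hl (NL_monotone H hm₁ hm₂)
  exact sub_eq_zero.1 (eq_zero_of_inn_self_nonpos H hdeg (by linarith))

end Monotone

section Existence

variable (H : Hypergraph V)

/-- `Φ`, whose subdifferential at `u` is `L(u)`. -/
def potential (u : V → ℝ) : ℝ := (1 / 2) * ∑ e ∈ H.E, H.w e * sig e u ^ 2

/-- The functional whose minimiser is `J_λ f`. -/
def proxObjective (l : ℝ) (f g : V → ℝ) : ℝ :=
  (1 / 2) * inn H (g - f) (g - f) + l * potential H (Dinv H g)

lemma potential_nonneg (u : V → ℝ) : 0 ≤ potential H u :=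
  mul_nonneg (by norm_num) <|
    Finset.sum_nonneg fun e he => mul_nonneg (H.w_pos e he).le (sq_nonneg _)

lemma continuous_proxObjective (l : ℝ) (f : V → ℝ) : Continuous (proxObjective H l f) := by
  unfold proxObjective potential inn Dinv
  fun_prop

lemma exists_forall_proxObjective_le (hdeg : ∀ x, 0 < deg H x) {l : ℝ} (hl : 0 ≤ l)
    (f : V → ℝ) : ∃ g, ∀ g', proxObjective H l f g ≤ proxObjective H l f g' := by
  refine (continuous_proxObjective H l f).exists_forall_le' f ?_
  refine Filter.mem_cocompact.2 ⟨Set.univ.pi fun x => Metric.closedBall (f x)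
    √(2 * deg H x * proxObjective H l f f), isCompact_univ_pi fun _ => isCompact_closedBall _ _,
    fun g hg => ?_⟩
  by_contra hlt
  have hhalf : inn H (g - f) (g - f) ≤ 2 * proxObjective H l f f := by
    have := mul_nonneg hl (potential_nonneg H (Dinv H g))
    have : proxObjective H l f g < proxObjective H l f f := lt_of_not_ge hlt
    unfold proxObjective at *
    linarith
  refine hg fun x _ => Real.abs_le_sqrt ?_
  calc (g x - f x) ^ 2 ≤ deg H x * inn H (g - f) (g - f) := sq_le_deg_mul_inn_self H hdeg (g - f) x
    _ ≤ 2 * deg H x * proxObjective H l f f := by nlinarith [hdeg x]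

def faceSelections (u : V → ℝ) : Set (Finset V → V → ℝ) :=
  Set.univ.pi fun e => if e ∈ H.E then face e u else {0}

/-- On `faceSelections H u` this parametrises `L(u)`. -/
def lapOf (u : V → ℝ) : (Finset V → V → ℝ) →ₗ[ℝ] V → ℝ :=
  ∑ e ∈ H.E, (H.w e * sig e u) • LinearMap.proj e

lemma lapOf_apply (u : V → ℝ) (b : Finset V → V → ℝ) :
    lapOf H u b = ∑ e ∈ H.E, (H.w e * sig e u) • b e := by
  simp [lapOf]

lemma mem_face_of_mem_faceSelections {u : V → ℝ} {b : Finset V → V → ℝ}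
    (hb : b ∈ faceSelections H u) {e : Finset V} (he : e ∈ H.E) : b e ∈ face e u := by
  simpa [he] using hb e (Set.mem_univ e)

lemma convex_faceSelections (u : V → ℝ) : Convex ℝ (faceSelections H u) :=
  convex_pi fun e _ => by split_ifs; exacts [convex_face e u, convex_singleton 0]

lemma isCompact_faceSelections (u : V → ℝ) : IsCompact (faceSelections H u) :=
  isCompact_univ_pi fun e => by split_ifs; exacts [isCompact_face e u, isCompact_singleton]

lemma lapOf_mem_Lap {u : V → ℝ} {b : Finset V → V → ℝ} (hb : b ∈ faceSelections H u) :
    lapOf H u b ∈ Lap H u := by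
  have hface := fun e (he : e ∈ H.E) => mem_face_of_mem_faceSelections H hb he
  refine ⟨b, fun e he => ⟨(hface e he).1, fun b' hb' => ?_⟩, ?_⟩
  · rw [(hface e he).2]
    exact dot_le_sig (H.e_nonempty e he) hb' u
  · rw [lapOf_apply]
    exact Finset.sum_congr rfl fun e he => by rw [(hface e he).2]

lemma nonneg_of_eventually_nonneg_mul_add_mul_sq {A B : ℝ}
    (h : ∀ᶠ t in 𝓝[>] (0 : ℝ), 0 ≤ A * t + B * t ^ 2) : 0 ≤ A := by
  have hlim : Tendsto (fun t : ℝ => A + B * t) (𝓝[>] 0) (𝓝 A) :=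
    ((continuous_const.add (continuous_const.mul continuous_id)).tendsto' 0 A
      (by simp)).mono_left nhdsWithin_le_nhds
  refine ge_of_tendsto hlim ?_
  filter_upwards [h, self_mem_nhdsWithin] with t ht (htpos : 0 < t)
  exact nonneg_of_mul_nonneg_right (by linarith) htpos

/-- First-order optimality at a minimiser `g`: in every direction `v`, the one-sided derivative
`⟨g - f + λ h, v⟩` is nonnegative for some `h ∈ 𝓛(g)`. -/
lemma exists_faceSelections_inn_nonneg {l : ℝ} (hl : 0 ≤ l)
    {f g : V → ℝ} (hg : ∀ g', proxObjective H l f g ≤ proxObjective H l f g') (v : V → ℝ) :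
    ∃ b ∈ faceSelections H (Dinv H g), 0 ≤ inn H (g - f + l • lapOf H (Dinv H g) b) v := by
  set u := Dinv H g
  set w := Dinv H v
  choose! B hB hev using fun e (he : e ∈ H.E) =>
    exists_mem_face_eventually_sig_add_smul_le (H.e_nonempty e he) u w
  set μ : Finset V → ℝ := fun e => dot (B e) w
  refine ⟨fun e => if e ∈ H.E then B e else 0, fun e _ => ?_, ?_⟩
  · by_cases he : e ∈ H.E <;> simp [he, hB e]
  have hlap : inn H (lapOf H u fun e => if e ∈ H.E then B e else 0) v =
      ∑ e ∈ H.E, H.w e * (sig e u * μ e) := by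
    rw [lapOf_apply, inn_eq_dotProduct_Dinv, sum_dotProduct]
    refine Finset.sum_congr rfl fun e he => ?_
    rw [if_pos he, smul_dotProduct, smul_eq_mul, mul_assoc]
    rfl
  refine nonneg_of_eventually_nonneg_mul_add_mul_sq
    (B := (1 / 2) * inn H v v + l / 2 * ∑ e ∈ H.E, H.w e * μ e ^ 2) ?_
  filter_upwards [(Finset.eventually_all H.E).2 hev, self_mem_nhdsWithin] with t ht (htpos : 0 < t)
  have hedge : ∀ e ∈ H.E, H.w e * sig e (u + t • w) ^ 2 ≤
      H.w e * sig e u ^ 2 + 2 * t * (H.w e * (sig e u * μ e)) + t ^ 2 * (H.w e * μ e ^ 2) := by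
    intro e he
    have h0 := sig_nonneg (H.e_nonempty e he) (u + t • w)
    have hsq := pow_le_pow_left₀ h0 (ht e he) 2
    nlinarith [H.w_pos e he]
  have hpot := Finset.sum_le_sum hedge
  simp only [Finset.sum_add_distrib, ← Finset.mul_sum] at hpot
  have hmin := hg (g + t • v)
  simp only [proxObjective, Dinv_add_smul, add_sub_right_comm g, inn_add_smul_self] at hmin
  rw [inn_eq_dotProduct_Dinv, add_dotProduct, smul_dotProduct, ← inn_eq_dotProduct_Dinv,
    ← inn_eq_dotProduct_Dinv, hlap, smul_eq_mul]
  unfold potential at hmin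
  nlinarith [mul_le_mul_of_nonneg_left hpot hl]

lemma zero_mem_of_forall_exists_inn_nonneg (hdeg : ∀ x, 0 < deg H x) {K : Set (V → ℝ)}
    (hconv : Convex ℝ K) (hclosed : IsClosed K) (h : ∀ v, ∃ k ∈ K, 0 ≤ inn H k v) :
    (0 : V → ℝ) ∈ K := by
  by_contra h0
  obtain ⟨φ, s, hφK, hs⟩ := geometric_hahn_banach_closed_point hconv hclosed h0
  obtain ⟨k, hk, hkv⟩ := h fun z => deg H z * φ (delta z)
  have hφ : inn H k (fun z => deg H z * φ (delta z)) = φ k := by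
    have hsum := (φ : (V → ℝ) →ₗ[ℝ] ℝ).pi_apply_eq_sum_univ k
    rw [ContinuousLinearMap.coe_coe] at hsum
    rw [hsum]
    refine Finset.sum_congr rfl fun z _ => ?_
    have : (fun j => if z = j then (1 : ℝ) else 0) = delta z := by
      funext j; simp [delta, eq_comm]
    rw [this, smul_eq_mul]
    have := (hdeg z).ne'
    field_simp
  linarith [hφK k hk, map_zero φ]

lemma exists_eq_add_smul_mem_NL (hdeg : ∀ x, 0 < deg H x) {l : ℝ} (hl : 0 ≤ l)
    (f : V → ℝ) : ∃ g, ∃ h ∈ NL H g, f = g + l • h := by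
  obtain ⟨g, hg⟩ := exists_forall_proxObjective_le H hdeg hl f
  set S := faceSelections H (Dinv H g)
  set A : (Finset V → V → ℝ) → V → ℝ := fun b => g - f + l • lapOf H (Dinv H g) b
  have hA : Continuous A :=
    continuous_const.add ((lapOf H (Dinv H g)).continuous_of_finiteDimensional.const_smul l)
  have hconv : Convex ℝ (A '' S) := by
    rintro _ ⟨b₁, hb₁, rfl⟩ _ ⟨b₂, hb₂, rfl⟩ s t hs ht hst
    refine ⟨s • b₁ + t • b₂, convex_faceSelections H _ hb₁ hb₂ hs ht hst, ?_⟩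
    obtain rfl : t = 1 - s := by linarith
    simp only [A, map_add, map_smul]
    module
  obtain ⟨b, hb, hAb⟩ := zero_mem_of_forall_exists_inn_nonneg H hdeg hconv
    ((isCompact_faceSelections H _).image hA).isClosed fun v => by
      obtain ⟨b, hb, hv⟩ := exists_faceSelections_inn_nonneg H hl hg v
      exact ⟨A b, Set.mem_image_of_mem A hb, hv⟩
  refine ⟨g, lapOf H (Dinv H g) b, lapOf_mem_Lap H hb, ?_⟩
  linear_combination -hAb

end Existence

section Resolvent

variable (H : Hypergraph V)

lemma resolvent_spec (hdeg : ∀ x, 0 < deg H x) {l : ℝ} (hl : 0 ≤ l) (f : V → ℝ) :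
    ∃ h ∈ NL H (Resolvent H l f), f = Resolvent H l f + l • h :=
  Classical.epsilon_spec (exists_eq_add_smul_mem_NL H hdeg hl f)

lemma resolvent_eq (hdeg : ∀ x, 0 < deg H x) {l : ℝ} (hl : 0 ≤ l) {f g h : V → ℝ}
    (hm : h ∈ NL H g) (he : f = g + l • h) : Resolvent H l f = g := by
  obtain ⟨h', hm', he'⟩ := resolvent_spec H hdeg hl f
  exact eq_of_add_smul_mem_NL H hdeg hl hm' hm (he'.symm.trans he)

lemma Lap_subset_Lap_add_const (u : V → ℝ) (c : ℝ) : Lap H u ⊆ Lap H (u + fun _ => c) := by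
  have hdot : ∀ e, ∀ b ∈ Bp e, dot b (u + fun _ => c) = dot b u := fun e b hb => by
    rw [dot_eq_dotProduct, dotProduct_add, ← dot_eq_dotProduct, ← dot_eq_dotProduct,
      dot_const_eq_zero_of_mem_Bp hb, add_zero]
  rintro _ ⟨b, hb, rfl⟩
  refine ⟨b, fun e he => ⟨(hb e he).1, fun b' hb' => ?_⟩, ?_⟩
  · rw [hdot e b' hb', hdot e _ (hb e he).1]
    exact (hb e he).2 b' hb'
  · exact Finset.sum_congr rfl fun e he => by rw [hdot e _ (hb e he).1]

lemma add_smul_deg_div (hdeg : ∀ x, 0 < deg H x) (f : V → ℝ) (c : ℝ) (z : V) :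
    (f + c • deg H) z / deg H z = f z / deg H z + c := by
  simp [add_div, (hdeg z).ne']

lemma resolvent_add_smul_deg (hdeg : ∀ x, 0 < deg H x) {l : ℝ} (hl : 0 ≤ l)
    (f : V → ℝ) (c : ℝ) : Resolvent H l (f + c • deg H) = Resolvent H l f + c • deg H := by
  obtain ⟨h, hm, he⟩ := resolvent_spec H hdeg hl f
  refine resolvent_eq H hdeg hl (h := h) ?_ ?_
  · have hD : Dinv H (Resolvent H l f + c • deg H) = Dinv H (Resolvent H l f) + fun _ => c :=
      funext (add_smul_deg_div H hdeg _ c)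
    rw [NL, hD]
    exact Lap_subset_Lap_add_const H _ c hm
  · linear_combination he

end Resolvent

section Lipschitz

variable (H : Hypergraph V)

lemma gdist_le_hdiam (x y : V) : gdist H x y ≤ hdiam H := by
  unfold gdist hdiam
  exact_mod_cast Finset.le_sup (f := fun p : V × V => hdistN H p.1 p.2) (Finset.mem_univ (x, y))

lemma abs_sub_le_hdiam_of_mem_Lip1 {f : V → ℝ} (hf : f ∈ Lip1 H) (x y : V) :
    |f x / deg H x - f y / deg H y| ≤ hdiam H := by
  have hxy := hf x y
  have hyx := hf y x
  rw [inn_delta_sub] at hxy hyx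
  rw [abs_le]
  constructor <;> linarith [gdist_le_hdiam H x y, gdist_le_hdiam H y x]

lemma add_smul_deg_mem_Lip1 (hdeg : ∀ x, 0 < deg H x) {f : V → ℝ} (hf : f ∈ Lip1 H) (c : ℝ) :
    f + c • deg H ∈ Lip1 H := fun x y => by
  rw [inn_delta_sub, add_smul_deg_div H hdeg, add_smul_deg_div H hdeg, add_sub_add_right_eq_sub,
    ← inn_delta_sub]
  exact hf x y

lemma iSup_abs_div_deg_le_iff [Nonempty V] (f : V → ℝ) (r : ℝ) :
    (⨆ z, |f z / deg H z|) ≤ r ↔ ∀ z, |f z / deg H z| ≤ r :=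
  ciSup_le_iff (Set.finite_range _).bddAbove

lemma isClosed_Lip1 : IsClosed (Lip1 H) := by
  have : Lip1 H = ⋂ x, ⋂ y, {f | f x / deg H x - f y / deg H y ≤ gdist H x y} := by
    ext f; simp [Lip1, inn_delta_sub]
  rw [this]
  exact isClosed_iInter fun x => isClosed_iInter fun y =>
    isClosed_le (by fun_prop) continuous_const

lemma isCompact_Lip1_inter_bounded [Nonempty V] (hdeg : ∀ x, 0 < deg H x) :
    IsCompact {f : V → ℝ | f ∈ Lip1 H ∧ (⨆ z : V, |f z / deg H z|) ≤ hdiam H} := by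
  have : {f : V → ℝ | f ∈ Lip1 H ∧ (⨆ z : V, |f z / deg H z|) ≤ hdiam H} =
      Lip1 H ∩ ⋂ z, {f | |f z / deg H z| ≤ hdiam H} := by
    ext f; simp [iSup_abs_div_deg_le_iff]
  rw [this]
  refine IsCompact.of_isClosed_subset
    (isCompact_univ_pi fun z => isCompact_closedBall (0 : ℝ) (hdiam H * deg H z))
    ((isClosed_Lip1 H).inter <| isClosed_iInter fun z => isClosed_le (by fun_prop) continuous_const)
    fun f hf z _ => ?_
  have hz : |f z / deg H z| ≤ hdiam H := Set.mem_iInter.1 hf.2 z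
  rw [abs_div, abs_of_pos (hdeg z), div_le_iff₀ (hdeg z)] at hz
  simpa using hz

end Lipschitz

theorem stmt5_general (H : Hypergraph V)
    (hdeg : ∀ x : V, 0 < deg H x) (l : ℝ) (hl : 0 < l) (x y : V) :
    KD H l x y =
      sSup { r | ∃ f ∈ Lip1 H, (⨆ z : V, |f z / deg H z|) ≤ hdiam H ∧
        r = inn H (Resolvent H l f) (delta x - delta y) } ∧
    IsCompact { f : V → ℝ | f ∈ Lip1 H ∧ (⨆ z : V, |f z / deg H z|) ≤ hdiam H } := by
  have : Nonempty V := ⟨x⟩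
  refine ⟨congrArg sSup (Set.ext fun r => ⟨?_, ?_⟩), isCompact_Lip1_inter_bounded H hdeg⟩
  · rintro ⟨f, hf, rfl⟩
    set c := -(f x / deg H x)
    refine ⟨f + c • deg H, add_smul_deg_mem_Lip1 H hdeg hf c,
      (iSup_abs_div_deg_le_iff H _ _).2 fun z => ?_, ?_⟩
    · rw [add_smul_deg_div H hdeg, ← sub_eq_add_neg]
      exact abs_sub_le_hdiam_of_mem_Lip1 H hf z x
    · rw [resolvent_add_smul_deg H hdeg hl.le, inn_delta_sub, inn_delta_sub,
        add_smul_deg_div H hdeg, add_smul_deg_div H hdeg, add_sub_add_right_eq_sub]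
  · rintro ⟨f, hf, -, rfl⟩
    exact ⟨f, hf, rfl⟩

/-- `KD_λ(x,y)` may be computed over the weighted 1-Lipschitz
functions with `‖f‖_∞ ≤ diam(H)`, and this set of functions is compact. -/
theorem stmt5 [Nonempty V] (H : Hypergraph V) (hconn : Connected H)
    (hdeg : ∀ x : V, 0 < deg H x) (l : ℝ) (hl : 0 < l) (x y : V) :
    KD H l x y =
      sSup { r | ∃ f ∈ Lip1 H, (⨆ z : V, |f z / deg H z|) ≤ hdiam H ∧
        r = inn H (Resolvent H l f) (delta x - delta y) } ∧
    IsCompact { f : V → ℝ | f ∈ Lip1 H ∧ (⨆ z : V, |f z / deg H z|) ≤ hdiam H } :=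
  stmt5_general H hdeg l hl x y

end HypRicci
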